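/- arXiv:1206.3202 — 8 statements merged into one kernel-verified Lean document; each statement's English description precedes it below -/
import Mathlib

section
/- In the d-dimensional hypercube Q_d with d ≥ 2, every independent set in the subgraph induced by N(x) ∪ N(y), for adjacent vertices x and y, has size at most d; i.e., the locality ℓ(Q_d) equals d. -/
/-!
Let `x` and `y` differ in coordinate `i`. Flipping coordinate `i` is an automorphism of `Q_d`
exchanging `x` and `y`, so it carries `N(y)` onto `N(x)`; hence forgetting coordinate `i` maps
`N(x) ∪ N(y)` onto the image of `N(x)`, a set of at most `d` points. Two distinct vertices with
the same image differ only in coordinate `i`, so they are adjacent: on an independent set the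
map is injective, which bounds its size by `d`. Conversely `N(x)` itself is independent,
since `Q_d` has no triangles.
-/

/-- The `d`-dimensional hypercube graph on `{0,1}^d`: two strings are adjacent
iff they differ on exactly one coordinate. -/
def hypercube (d : ℕ) : SimpleGraph (Fin d → Bool) where
  Adj x y := ∃! i, x i ≠ y i
  symm := by
    constructor
    rintro x y ⟨i, hi, hu⟩
    exact ⟨i, Ne.symm hi, fun j hj => hu j (Ne.symm hj)⟩
  loopless := by
    constructor
    rintro x ⟨i, hi, -⟩
    exact hi rfl

open Finset Function

namespace hypercube

variable {d : ℕ}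

def flipCoord (u : Fin d → Bool) (i : Fin d) : Fin d → Bool :=
  update u i (!u i)

@[simp]
lemma flipCoord_apply_self (u : Fin d → Bool) (i : Fin d) : flipCoord u i i = !u i :=
  update_self _ _ _

lemma flipCoord_apply_of_ne (u : Fin d → Bool) {i k : Fin d} (h : k ≠ i) :
    flipCoord u i k = u k :=
  update_of_ne h _ _

lemma flipCoord_apply_ne_iff (u v : Fin d → Bool) (i k : Fin d) :
    flipCoord u i k ≠ flipCoord v i k ↔ u k ≠ v k := by
  obtain rfl | hki := eq_or_ne k i
  · simp
  · rw [flipCoord_apply_of_ne u hki, flipCoord_apply_of_ne v hki]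

lemma flipCoord_apply_ne_self_iff (u : Fin d → Bool) (i k : Fin d) :
    flipCoord u i k ≠ u k ↔ k = i := by
  obtain rfl | hki := eq_or_ne k i
  · simp
  · simp [flipCoord_apply_of_ne u hki, hki]

@[simp]
lemma flipCoord_flipCoord (u : Fin d → Bool) (i : Fin d) : flipCoord (flipCoord u i) i = u := by
  simp [flipCoord]

lemma update_flipCoord (u : Fin d → Bool) (i : Fin d) (b : Bool) :
    update (flipCoord u i) i b = update u i b :=
  update_idem _ _ _

lemma flipCoord_injective (u : Fin d → Bool) : Injective (flipCoord u) := by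
  intro i j hij
  by_contra hne
  simpa [flipCoord_apply_of_ne u hne] using congrFun hij i

lemma adj_iff_exists_eq_flipCoord {u v : Fin d → Bool} :
    (hypercube d).Adj u v ↔ ∃ i, v = flipCoord u i := by
  constructor
  · rintro ⟨i, hi, huniq⟩
    refine ⟨i, funext fun k => ?_⟩
    obtain rfl | hki := eq_or_ne k i
    · rw [flipCoord_apply_self]; exact Bool.eq_not_of_ne (Ne.symm hi)
    · rw [flipCoord_apply_of_ne u hki]
      exact (not_not.mp (mt (huniq k) hki)).symm
  · rintro ⟨i, rfl⟩
    exact ⟨i, by simp, fun k hk => (flipCoord_apply_ne_self_iff u i k).mp (Ne.symm hk)⟩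

lemma adj_flipCoord (u : Fin d → Bool) (i : Fin d) : (hypercube d).Adj u (flipCoord u i) :=
  adj_iff_exists_eq_flipCoord.mpr ⟨i, rfl⟩

lemma neighborSet_eq_range_flipCoord (u : Fin d → Bool) :
    (hypercube d).neighborSet u = Set.range (flipCoord u) := by
  ext v
  simp [adj_iff_exists_eq_flipCoord, eq_comm]

lemma eq_flipCoord_of_adj {x y : Fin d → Bool} {i : Fin d} (hxy : (hypercube d).Adj x y)
    (hi : x i ≠ y i) : y = flipCoord x i := by
  obtain ⟨j, rfl⟩ := adj_iff_exists_eq_flipCoord.mp hxy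
  rw [(flipCoord_apply_ne_self_iff x j i).mp (Ne.symm hi)]

lemma adj_flipCoord_flipCoord {u v : Fin d → Bool} (h : (hypercube d).Adj u v) (i : Fin d) :
    (hypercube d).Adj (flipCoord u i) (flipCoord v i) := by
  obtain ⟨k, hk, huniq⟩ := h
  exact ⟨k, (flipCoord_apply_ne_iff u v i k).mpr hk,
    fun j hj => huniq j ((flipCoord_apply_ne_iff u v i j).mp hj)⟩

lemma not_adj_of_adj_of_adj {x u v : Fin d → Bool} (hu : (hypercube d).Adj x u)
    (hv : (hypercube d).Adj x v) : ¬ (hypercube d).Adj u v := by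
  obtain ⟨j, rfl⟩ := adj_iff_exists_eq_flipCoord.mp hu
  obtain ⟨k, rfl⟩ := adj_iff_exists_eq_flipCoord.mp hv
  intro hadj
  obtain rfl | hjk := eq_or_ne j k
  · exact (hypercube d).loopless.irrefl _ hadj
  · obtain ⟨i, -, huniq⟩ := hadj
    have differs_at {a b : Fin d} (hab : a ≠ b) : flipCoord x a a ≠ flipCoord x b a := by
      rw [flipCoord_apply_self, flipCoord_apply_of_ne x hab]
      exact Bool.not_ne_self _
    exact hjk ((huniq j (differs_at hjk)).trans (huniq k (differs_at hjk.symm).symm).symm)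

lemma adj_of_update_eq_update {u v : Fin d → Bool} {i : Fin d} {b : Bool}
    (h : update u i b = update v i b) (hne : u ≠ v) : (hypercube d).Adj u v := by
  have agree_off {k : Fin d} (hki : k ≠ i) : u k = v k := by
    simpa [update_of_ne hki] using congrFun h k
  refine ⟨i, fun hi => hne (funext fun k => ?_),
    fun k hk => by_contra fun hki => hk (agree_off hki)⟩
  obtain rfl | hki := eq_or_ne k i
  · exact hi
  · exact agree_off hki

theorem card_le_of_isIndepSet_of_subset_neighborSet_union {x y : Fin d → Bool}
    (hxy : (hypercube d).Adj x y) {I : Finset (Fin d → Bool)}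
    (hsub : (↑I : Set (Fin d → Bool)) ⊆
      (hypercube d).neighborSet x ∪ (hypercube d).neighborSet y)
    (hind : (hypercube d).IsIndepSet ↑I) : I.card ≤ d := by
  obtain ⟨i, hi⟩ := hxy.exists
  have hyx : flipCoord y i = x := by rw [eq_flipCoord_of_adj hxy hi, flipCoord_flipCoord]
  let forget (u : Fin d → Bool) : Fin d → Bool := update u i false
  have forget_mem : ∀ u ∈ I, forget u ∈ univ.image (forget ∘ flipCoord x) := by
    intro u hu
    rcases hsub hu with hxu | hyu
    · obtain ⟨j, rfl⟩ := adj_iff_exists_eq_flipCoord.mp hxu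
      exact mem_image_of_mem _ (mem_univ j)
    · obtain ⟨j, hj⟩ := adj_iff_exists_eq_flipCoord.mp (hyx ▸ adj_flipCoord_flipCoord hyu i)
      refine mem_image.mpr ⟨j, mem_univ j, ?_⟩
      simp only [comp_apply, forget, ← hj, update_flipCoord]
  have forget_injOn : Set.InjOn forget I := fun u hu v hv huv =>
    by_contra fun hne => hind hu hv hne (adj_of_update_eq_update huv hne)
  calc I.card ≤ (univ.image (forget ∘ flipCoord x)).card :=
        card_le_card_of_injOn _ forget_mem forget_injOn
    _ ≤ d := card_image_le.trans_eq (by simp)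

end hypercube

open hypercube in
theorem hypercube_locality_general (d : ℕ)
    (x y : Fin d → Bool) (hxy : (hypercube d).Adj x y) :
    (∀ I : Finset (Fin d → Bool),
        (↑I : Set (Fin d → Bool)) ⊆ (hypercube d).neighborSet x ∪ (hypercube d).neighborSet y →
        (∀ u ∈ I, ∀ v ∈ I, ¬ (hypercube d).Adj u v) →
        I.card ≤ d) ∧
    (∃ I : Finset (Fin d → Bool),
        (↑I : Set (Fin d → Bool)) ⊆ (hypercube d).neighborSet x ∪ (hypercube d).neighborSet y ∧
        (∀ u ∈ I, ∀ v ∈ I, ¬ (hypercube d).Adj u v) ∧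
        I.card = d) := by
  refine ⟨fun I hsub hind => card_le_of_isIndepSet_of_subset_neighborSet_union hxy hsub
    fun u hu v hv _ => hind u hu v hv, univ.image (flipCoord x), ?_, ?_, ?_⟩
  · rw [coe_image, coe_univ, Set.image_univ, ← neighborSet_eq_range_flipCoord]
    exact Set.subset_union_left
  · simp only [mem_image, mem_univ, true_and]
    rintro _ ⟨j, rfl⟩ _ ⟨k, rfl⟩
    exact not_adj_of_adj_of_adj (adj_flipCoord x j) (adj_flipCoord x k)
  · simp [card_image_of_injective _ (flipCoord_injective x)]

/-- In `Q_d` (`d ≥ 2`), for adjacent vertices `x, y`, every independent set in the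
subgraph induced by `N(x) ∪ N(y)` has size at most `d`, and some such independent
set has size exactly `d`; i.e. the locality `ℓ(Q_d)` equals `d`. -/
theorem hypercube_locality (d : ℕ) (hd : 2 ≤ d)
    (x y : Fin d → Bool) (hxy : (hypercube d).Adj x y) :
    (∀ I : Finset (Fin d → Bool),
        (↑I : Set (Fin d → Bool)) ⊆ (hypercube d).neighborSet x ∪ (hypercube d).neighborSet y →
        (∀ u ∈ I, ∀ v ∈ I, ¬ (hypercube d).Adj u v) →
        I.card ≤ d) ∧
    (∃ I : Finset (Fin d → Bool),
        (↑I : Set (Fin d → Bool)) ⊆ (hypercube d).neighborSet x ∪ (hypercube d).neighborSet y ∧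
        (∀ u ∈ I, ∀ v ∈ I, ¬ (hypercube d).Adj u v) ∧
        I.card = d) :=
  hypercube_locality_general d x y hxy
end

section
/- Let Σ be a d-regular bipartite graph on N vertices with locality ℓ > 0, and let E ⊆ 𝓔, O ⊆ 𝓞 with no edge of Σ joining E and O. Let I = {x ∈ N(E) : N(x) ⊆ E}, J = {x ∈ N(O) : N(x) ⊆ O}, and R = V \ (E ∪ O ∪ I ∪ J). Then the number of connected components of the subgraph induced by R is at most N/ℓ. -/
/-- Let `Σ` be a `d`-regular bipartite graph on `N` vertices with locality `ℓ > 0`,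
and let `E₀ ⊆ 𝓔`, `O₀ ⊆ 𝓞` with no edge joining `E₀` and `O₀`.  With
`I = {x ∈ N(E₀) : N(x) ⊆ E₀}`, `J = {x ∈ N(O₀) : N(x) ⊆ O₀}` and
`R = V \ (E₀ ∪ O₀ ∪ I ∪ J)`, the subgraph induced by `R` has at most `N/ℓ`
connected components. -/
theorem comp_bound
    {V : Type*} [Fintype V] [DecidableEq V] (G : SimpleGraph V) [DecidableRel G.Adj]
    (d : ℕ) (hd : 1 ≤ d) (hreg : G.IsRegularOfDegree d)
    (side : V → Bool) (hbip : ∀ u v, G.Adj u v → side u ≠ side v)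
    (ℓ : ℕ) (hℓ : 0 < ℓ)
    (hloc : ∀ x y : V, G.Adj x y → ∀ I : Finset V,
      (∀ u ∈ I, u ∈ G.neighborFinset x ∪ G.neighborFinset y) →
      (∀ u ∈ I, ∀ v ∈ I, ¬ G.Adj u v) → I.card + ℓ ≤ 2 * d)
    (E₀ O₀ : Finset V)
    (hE : ∀ x ∈ E₀, side x = true) (hO : ∀ x ∈ O₀, side x = false)
    (hEO : ∀ u ∈ E₀, ∀ v ∈ O₀, ¬ G.Adj u v)
    (I J : Finset V)
    (hI : I = Finset.univ.filter fun x => G.neighborFinset x ⊆ E₀ ∧ x ∈ E₀.biUnion fun e => G.neighborFinset e)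
    (hJ : J = Finset.univ.filter fun x => G.neighborFinset x ⊆ O₀ ∧ x ∈ O₀.biUnion fun o => G.neighborFinset o)
    (R : Set V) (hR : R = {v : V | v ∉ E₀ ∧ v ∉ O₀ ∧ v ∉ I ∧ v ∉ J}) :
    (Nat.card (G.induce R).ConnectedComponent : ℝ) ≤ (Fintype.card V : ℝ) / ℓ := by
  classical
  -- membership in R
  have hmemR : ∀ v : V, v ∈ R ↔ (v ∉ E₀ ∧ v ∉ O₀ ∧ v ∉ I ∧ v ∉ J) := by
    intro v; rw [hR]; simp
  -- every vertex of R has a neighbor in R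
  have hnoiso : ∀ x : V, x ∈ R → ∃ y, G.Adj x y ∧ y ∈ R := by
    intro x hx
    obtain ⟨hxE, hxO, hxI, hxJ⟩ := (hmemR x).1 hx
    by_contra h
    push_neg at h
    -- all neighbors are in E₀ ∪ O₀
    have hnb : ∀ y, G.Adj x y → y ∈ E₀ ∨ y ∈ O₀ := by
      intro y hy
      have hyR := h y hy
      rw [hmemR] at hyR
      by_cases h1 : y ∈ E₀; · exact Or.inl h1
      by_cases h2 : y ∈ O₀; · exact Or.inr h2
      exfalso
      have hyIJ : y ∈ I ∨ y ∈ J := by tauto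
      have hxy : x ∈ G.neighborFinset y := by
        rw [SimpleGraph.mem_neighborFinset]; exact hy.symm
      rcases hyIJ with hyI | hyJ
      · rw [hI] at hyI
        exact hxE ((Finset.mem_filter.1 hyI).2.1 hxy)
      · rw [hJ] at hyJ
        exact hxO ((Finset.mem_filter.1 hyJ).2.1 hxy)
    -- x has a neighbor
    have hne : (G.neighborFinset x).Nonempty := by
      rw [← Finset.card_pos, G.card_neighborFinset_eq_degree, hreg x]; omega
    obtain ⟨z, hz⟩ := hne
    have hzadj : G.Adj x z := (SimpleGraph.mem_neighborFinset _ _ _).1 hz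
    cases hside : side x with
    | true =>
      -- all neighbors in O₀, hence x ∈ J
      have hall : ∀ y ∈ G.neighborFinset x, y ∈ O₀ := by
        intro y hy
        have hadj := (SimpleGraph.mem_neighborFinset _ _ _).1 hy
        rcases hnb y hadj with h1 | h2
        · exact absurd (hE y h1) (by have := hbip x y hadj; rw [hside] at this; tauto)
        · exact h2
      apply hxJ
      rw [hJ, Finset.mem_filter]
      refine ⟨Finset.mem_univ _, fun y hy => hall y hy, ?_⟩
      rw [Finset.mem_biUnion]
      exact ⟨z, hall z hz, by rw [SimpleGraph.mem_neighborFinset]; exact hzadj.symm⟩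
    | false =>
      have hall : ∀ y ∈ G.neighborFinset x, y ∈ E₀ := by
        intro y hy
        have hadj := (SimpleGraph.mem_neighborFinset _ _ _).1 hy
        rcases hnb y hadj with h1 | h2
        · exact h1
        · exact absurd (hO y h2) (by have := hbip x y hadj; rw [hside] at this; tauto)
      apply hxI
      rw [hI, Finset.mem_filter]
      refine ⟨Finset.mem_univ _, fun y hy => hall y hy, ?_⟩
      rw [Finset.mem_biUnion]
      exact ⟨z, hall z hz, by rw [SimpleGraph.mem_neighborFinset]; exact hzadj.symm⟩
  set H := G.induce R with hH
  haveI : Fintype ↥R := Fintype.ofFinite _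
  haveI : Finite H.ConnectedComponent := Quot.finite _
  haveI : Fintype H.ConnectedComponent := Fintype.ofFinite _
  -- key: each fiber of connectedComponentMk has ≥ ℓ elements
  have hfiber : ∀ c : H.ConnectedComponent,
      ℓ ≤ (Finset.univ.filter fun v : ↥R => H.connectedComponentMk v = c).card := by
    intro c
    obtain ⟨x, rfl⟩ := Quot.exists_rep c
    obtain ⟨xv, hxR⟩ := x
    obtain ⟨y, hxy, hyR⟩ := hnoiso xv hxR
    obtain ⟨hxE, hxO, hxI, hxJ⟩ := (hmemR xv).1 hxR
    obtain ⟨hyE, hyO, hyI, hyJ⟩ := (hmemR y).1 hyR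
    set S : Finset V := (G.neighborFinset xv ∪ G.neighborFinset y) \ (E₀ ∪ O₀) with hS
    -- |N(x) ∪ N(y)| = 2d
    have hdisj : Disjoint (G.neighborFinset xv) (G.neighborFinset y) := by
      rw [Finset.disjoint_left]
      intro z h1 h2
      have a1 := hbip xv z ((SimpleGraph.mem_neighborFinset _ _ _).1 h1)
      have a2 := hbip y z ((SimpleGraph.mem_neighborFinset _ _ _).1 h2)
      have a3 := hbip xv y hxy
      have key : ∀ a b c : Bool, a ≠ b → a ≠ c → b ≠ c → False := by decide
      exact key (side xv) (side y) (side z) a3 a1 a2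
    have hcardU : (G.neighborFinset xv ∪ G.neighborFinset y).card = 2 * d := by
      rw [Finset.card_union_of_disjoint hdisj, G.card_neighborFinset_eq_degree,
        G.card_neighborFinset_eq_degree, hreg, hreg]; ring
    -- the intersection with E₀ ∪ O₀ is independent
    have hT := hloc xv y hxy ((G.neighborFinset xv ∪ G.neighborFinset y) ∩ (E₀ ∪ O₀))
      (fun u hu => (Finset.mem_inter.1 hu).1)
      (by
        intro u hu v hv hadj
        have hu2 := (Finset.mem_inter.1 hu).2
        have hv2 := (Finset.mem_inter.1 hv).2
        rcases Finset.mem_union.1 hu2 with h1 | h1 <;> rcases Finset.mem_union.1 hv2 with h2 | h2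
        · exact hbip u v hadj (by rw [hE u h1, hE v h2])
        · exact hEO u h1 v h2 hadj
        · exact hEO v h2 u h1 hadj.symm
        · exact hbip u v hadj (by rw [hO u h1, hO v h2]))
    have hScard : ℓ ≤ S.card := by
      have := Finset.card_inter_add_card_sdiff
        (G.neighborFinset xv ∪ G.neighborFinset y) (E₀ ∪ O₀)
      rw [hcardU] at this
      rw [hS]
      omega
    -- S ⊆ R and every element of S is in the component of x
    have hSsub : S ⊆ (Finset.univ.filter fun v : ↥R =>
        H.connectedComponentMk v = H.connectedComponentMk ⟨xv, hxR⟩).image Subtype.val := by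
      intro z hz
      rw [hS, Finset.mem_sdiff] at hz
      obtain ⟨hzU, hzEO⟩ := hz
      have hzE : z ∉ E₀ := fun h => hzEO (Finset.mem_union.2 (Or.inl h))
      have hzO : z ∉ O₀ := fun h => hzEO (Finset.mem_union.2 (Or.inr h))
      -- z is adjacent to xv or y
      have hzadj : G.Adj z xv ∨ G.Adj z y := by
        rcases Finset.mem_union.1 hzU with h1 | h1
        · exact Or.inl ((SimpleGraph.mem_neighborFinset _ _ _).1 h1).symm
        · exact Or.inr ((SimpleGraph.mem_neighborFinset _ _ _).1 h1).symm
      have hzI : z ∉ I := by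
        intro h; rw [hI, Finset.mem_filter] at h
        rcases hzadj with h1 | h1
        · exact hxE (h.2.1 (by rw [SimpleGraph.mem_neighborFinset]; exact h1))
        · exact hyE (h.2.1 (by rw [SimpleGraph.mem_neighborFinset]; exact h1))
      have hzJ : z ∉ J := by
        intro h; rw [hJ, Finset.mem_filter] at h
        rcases hzadj with h1 | h1
        · exact hxO (h.2.1 (by rw [SimpleGraph.mem_neighborFinset]; exact h1))
        · exact hyO (h.2.1 (by rw [SimpleGraph.mem_neighborFinset]; exact h1))
      have hzR : z ∈ R := (hmemR z).2 ⟨hzE, hzO, hzI, hzJ⟩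
      rw [Finset.mem_image]
      refine ⟨⟨z, hzR⟩, Finset.mem_filter.2 ⟨Finset.mem_univ _, ?_⟩, rfl⟩
      rw [SimpleGraph.ConnectedComponent.eq]
      rcases hzadj with h1 | h1
      · exact SimpleGraph.Adj.reachable (by simpa [hH, SimpleGraph.comap_adj] using h1)
      · exact (SimpleGraph.Adj.reachable
          (show H.Adj ⟨z, hzR⟩ ⟨y, hyR⟩ by simpa [hH, SimpleGraph.comap_adj] using h1)).trans
          (SimpleGraph.Adj.reachable
            (show H.Adj ⟨y, hyR⟩ ⟨xv, hxR⟩ by simpa [hH, SimpleGraph.comap_adj] using hxy.symm))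
    calc ℓ ≤ S.card := hScard
      _ ≤ _ := Finset.card_le_card hSsub
      _ = _ := Finset.card_image_of_injective _ Subtype.val_injective
  -- counting
  have hsum : Fintype.card ↥R =
      ∑ c : H.ConnectedComponent,
        (Finset.univ.filter fun v : ↥R => H.connectedComponentMk v = c).card := by
    rw [← Finset.card_univ]
    exact Finset.card_eq_sum_card_fiberwise (fun x _ => Finset.mem_univ _)
  have hcount : Fintype.card H.ConnectedComponent * ℓ ≤ Fintype.card V := by
    calc Fintype.card H.ConnectedComponent * ℓ
        = ∑ _c : H.ConnectedComponent, ℓ := by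
          rw [Finset.sum_const, Finset.card_univ, smul_eq_mul]
      _ ≤ ∑ c : H.ConnectedComponent,
            (Finset.univ.filter fun v : ↥R => H.connectedComponentMk v = c).card :=
          Finset.sum_le_sum (fun c _ => hfiber c)
      _ = Fintype.card ↥R := hsum.symm
      _ ≤ Fintype.card V := Fintype.card_le_of_injective _ Subtype.val_injective
  rw [Nat.card_eq_fintype_card, le_div_iff₀ (by exact_mod_cast hℓ)]
  exact_mod_cast hcount
end

section
/- Let Σ be a d-regular bipartite graph with partition classes 𝓔 and 𝓞, and let E ⊆ 𝓔, O ⊆ 𝓞 with no edge joining E and O. Then the number of proper 3-colourings χ of Σ with χ^{-1}(0) = E ∪ O equals 2^{|I| + |J| + comp(R)}, where I = {x : N(x) ⊆ E}, J = {x : N(x) ⊆ O}, R = V \ (E ∪ O ∪ I ∪ J), and comp(R) is the number of connected components of the subgraph induced by R. -/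
private lemma fin3_ne ⦃a b : Fin 3⦄ (ha : a ≠ 0) (hb : b ≠ 0)
    (h : decide (a = 1) = decide (b = 1)) : a = b := by revert a b; decide

private lemma fin3_ne_iff ⦃a b : Fin 3⦄ ⦃s : Bool⦄ (ha : a ≠ 0) (hb : b ≠ 0)
    (h : decide ((a = 1) ↔ s = true) = decide ((b = 1) ↔ s = true)) : a = b := by
  revert a b s; decide

private lemma fin3_adj ⦃a b : Fin 3⦄ ⦃s t : Bool⦄ (ha : a ≠ 0) (hb : b ≠ 0)
    (hab : a ≠ b) (hst : s ≠ t) :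
    decide ((a = 1) ↔ s = true) = decide ((b = 1) ↔ t = true) := by
  revert a b s t; decide

private lemma fin3_if ⦃b s t : Bool⦄ (hst : s ≠ t) :
    (if b = s then (1 : Fin 3) else 2) ≠ (if b = t then 1 else 2) := by
  revert b s t; decide

private lemma fin3_cond (c : Bool) :
    decide ((if c then (1 : Fin 3) else 2) = 1) = c := by revert c; decide

private lemma fin3_decode (b s : Bool) :
    decide (((if b = s then (1 : Fin 3) else 2) = 1) ↔ s = true) = b := by
  revert b s; decide

set_option maxHeartbeats 1000000 in
/-- For a `d`-regular bipartite graph with classes `𝓔, 𝓞` and `E₀ ⊆ 𝓔`, `O₀ ⊆ 𝓞`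
with no edge joining them, the number of proper 3-colourings `χ` with
`χ⁻¹(0) = E₀ ∪ O₀` equals `2^{|I| + |J| + comp(R)}`. -/
theorem card_colourings_given_zero_set
    {V : Type*} [Fintype V] [DecidableEq V] (G : SimpleGraph V) [DecidableRel G.Adj]
    (d : ℕ) (hd : 1 ≤ d) (hreg : G.IsRegularOfDegree d)
    (side : V → Bool) (hbip : ∀ u v, G.Adj u v → side u ≠ side v)
    (E₀ O₀ : Finset V)
    (hE : ∀ x ∈ E₀, side x = true) (hO : ∀ x ∈ O₀, side x = false)
    (hEO : ∀ u ∈ E₀, ∀ v ∈ O₀, ¬ G.Adj u v)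
    (I J : Finset V)
    (hI : I = Finset.univ.filter fun x => G.neighborFinset x ⊆ E₀)
    (hJ : J = Finset.univ.filter fun x => G.neighborFinset x ⊆ O₀)
    (R : Set V) (hR : R = {v : V | v ∉ E₀ ∧ v ∉ O₀ ∧ v ∉ I ∧ v ∉ J}) :
    Nat.card {χ : V → Fin 3 // (∀ u v, G.Adj u v → χ u ≠ χ v) ∧
        (∀ v, χ v = 0 ↔ v ∈ E₀ ∪ O₀)} =
      2 ^ (I.card + J.card + Nat.card (G.induce R).ConnectedComponent) := by
  classical
  have hNe : ∀ x : V, ∃ y, y ∈ G.neighborFinset x := by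
    intro x
    have h1 : (G.neighborFinset x).card = d := hreg x
    have : (G.neighborFinset x).Nonempty := by rw [← Finset.card_pos, h1]; omega
    exact this
  have hImem : ∀ x ∈ I, ∀ y, G.Adj x y → y ∈ E₀ := by
    intro x hx y hy; rw [hI, Finset.mem_filter] at hx
    exact hx.2 ((SimpleGraph.mem_neighborFinset G x y).2 hy)
  have hJmem : ∀ x ∈ J, ∀ y, G.Adj x y → y ∈ O₀ := by
    intro x hx y hy; rw [hJ, Finset.mem_filter] at hx
    exact hx.2 ((SimpleGraph.mem_neighborFinset G x y).2 hy)
  have hIfact : ∀ x ∈ I, x ∉ E₀ ∧ x ∉ O₀ := by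
    intro x hx
    obtain ⟨y, hy⟩ := hNe x
    have hadj : G.Adj x y := (SimpleGraph.mem_neighborFinset G x y).1 hy
    have hyE : y ∈ E₀ := hImem x hx y hadj
    have hsx : side x ≠ true := fun h => hbip x y hadj (h.trans (hE y hyE).symm)
    constructor
    · intro hxE; exact hsx (hE x hxE)
    · intro hxO; exact hEO y hyE x hxO hadj.symm
  have hJfact : ∀ x ∈ J, x ∉ E₀ ∧ x ∉ O₀ := by
    intro x hx
    obtain ⟨y, hy⟩ := hNe x
    have hadj : G.Adj x y := (SimpleGraph.mem_neighborFinset G x y).1 hy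
    have hyO : y ∈ O₀ := hJmem x hx y hadj
    have hsx : side x ≠ false := fun h => hbip x y hadj (h.trans (hO y hyO).symm)
    constructor
    · intro hxE; exact hEO x hxE y hyO hadj
    · intro hxO; exact hsx (hO x hxO)
  have hIJ : ∀ x, x ∈ I → x ∈ J → False := by
    intro x hxI hxJ
    obtain ⟨y, hy⟩ := hNe x
    have hadj : G.Adj x y := (SimpleGraph.mem_neighborFinset G x y).1 hy
    have : (true : Bool) = false :=
      (hE y (hImem x hxI y hadj)).symm.trans (hO y (hJmem x hxJ y hadj))
    exact absurd this (by decide)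
  have hRmem : ∀ v, v ∈ R ↔ v ∉ E₀ ∧ v ∉ O₀ ∧ v ∉ I ∧ v ∉ J := by
    intro v; rw [hR]; simp only [Set.mem_setOf_eq]
  have hRnot : ∀ v ∈ R, v ∉ E₀ ∧ v ∉ O₀ ∧ v ∉ I ∧ v ∉ J := fun v hv => (hRmem v).1 hv
  have hadjR : ∀ u v, G.Adj u v → u ∉ E₀ → u ∉ O₀ → v ∉ E₀ → v ∉ O₀ → u ∈ R := by
    intro u v huv huE huO hvE hvO
    rw [hRmem]
    refine ⟨huE, huO, fun hu => hvE (hImem u hu v huv), fun hu => hvO (hJmem u hu v huv)⟩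
  have hnotboth : ∀ u v, G.Adj u v → u ∈ E₀ ∪ O₀ → v ∈ E₀ ∪ O₀ → False := by
    intro u v huv hu hv
    rcases Finset.mem_union.1 hu with hu | hu <;> rcases Finset.mem_union.1 hv with hv | hv
    · exact hbip u v huv ((hE u hu).trans (hE v hv).symm)
    · exact hEO u hu v hv huv
    · exact hEO v hv u hu huv.symm
    · exact hbip u v huv ((hO u hu).trans (hO v hv).symm)
  set Φ : {χ : V → Fin 3 // (∀ u v, G.Adj u v → χ u ≠ χ v) ∧
      (∀ v, χ v = 0 ↔ v ∈ E₀ ∪ O₀)} →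
      (I → Bool) × (J → Bool) × ((G.induce R).ConnectedComponent → Bool) := fun χ =>
    (fun i => decide (χ.1 i.1 = 1), fun j => decide (χ.1 j.1 = 1),
      SimpleGraph.ConnectedComponent.lift
        (fun v => decide ((χ.1 v.1 = 1) ↔ side v.1 = true))
        (by
          intro v w p hp
          clear hp
          induction p with
          | nil => rfl
          | @cons a b c hab q ih =>
            refine Eq.trans ?_ ih
            have hadj : G.Adj a.1 b.1 := by simpa using hab
            have haE : (a : V) ∉ E₀ ∪ O₀ := by
              have := hRnot a.1 a.2
              simp only [Finset.mem_union]
              tauto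
            have hbE : (b : V) ∉ E₀ ∪ O₀ := by
              have := hRnot b.1 b.2
              simp only [Finset.mem_union]
              tauto
            have ha0 : χ.1 a.1 ≠ 0 := fun h0 => haE ((χ.2.2 a.1).1 h0)
            have hb0 : χ.1 b.1 ≠ 0 := fun h0 => hbE ((χ.2.2 b.1).1 h0)
            exact fin3_adj ha0 hb0 (χ.2.1 a.1 b.1 hadj) (hbip a.1 b.1 hadj))) with hΦ
  have hbij : Function.Bijective Φ := by
    constructor
    · -- injectivity
      intro χ χ' h
      have h1 := congrArg Prod.fst h
      have h2 := congrArg (fun p => p.2.1) h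
      have h3 := congrArg (fun p => p.2.2) h
      simp only [hΦ] at h1 h2 h3
      apply Subtype.ext
      funext v
      by_cases hv : v ∈ E₀ ∪ O₀
      · rw [(χ.2.2 v).2 hv, (χ'.2.2 v).2 hv]
      · have h0 : χ.1 v ≠ 0 := fun h0 => hv ((χ.2.2 v).1 h0)
        have h0' : χ'.1 v ≠ 0 := fun h0 => hv ((χ'.2.2 v).1 h0)
        rw [Finset.mem_union] at hv
        push_neg at hv
        by_cases hvI : v ∈ I
        · exact fin3_ne h0 h0' (congrFun h1 ⟨v, hvI⟩)
        · by_cases hvJ : v ∈ J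
          · exact fin3_ne h0 h0' (congrFun h2 ⟨v, hvJ⟩)
          · have hvR : v ∈ R := (hRmem v).2 ⟨hv.1, hv.2, hvI, hvJ⟩
            have := congrFun h3 ((G.induce R).connectedComponentMk ⟨v, hvR⟩)
            simp only [SimpleGraph.ConnectedComponent.lift_mk] at this
            exact fin3_ne_iff h0 h0' this
    · -- surjectivity
      intro p
      set χ : V → Fin 3 := fun v =>
        if v ∈ E₀ ∪ O₀ then 0
        else if hvI : v ∈ I then (if p.1 ⟨v, hvI⟩ then 1 else 2)
        else if hvJ : v ∈ J then (if p.2.1 ⟨v, hvJ⟩ then 1 else 2)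
        else if hvR : v ∈ R then
          (if p.2.2 ((G.induce R).connectedComponentMk ⟨v, hvR⟩) = side v then 1 else 2)
        else 0 with hχ
      have hzval : ∀ v ∈ E₀ ∪ O₀, χ v = 0 := by
        intro v hv; rw [hχ]; simp only [hv, if_true]
      have hIval : ∀ (v : V) (hvI : v ∈ I), χ v = if p.1 ⟨v, hvI⟩ then 1 else 2 := by
        intro v hvI
        have hv : v ∉ E₀ ∪ O₀ := by
          have := hIfact v hvI
          simp only [Finset.mem_union]; tauto
        rw [hχ]; simp only [hv, if_false, hvI, dif_pos]
      have hJval : ∀ (v : V) (hvJ : v ∈ J), χ v = if p.2.1 ⟨v, hvJ⟩ then 1 else 2 := by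
        intro v hvJ
        have hv : v ∉ E₀ ∪ O₀ := by
          have := hJfact v hvJ
          simp only [Finset.mem_union]; tauto
        have hvI : v ∉ I := fun hvI => hIJ v hvI hvJ
        rw [hχ]; simp only [hv, if_false, hvI, dif_neg, not_false_iff, hvJ, dif_pos]
      have hRval : ∀ (v : V) (hvR : v ∈ R),
          χ v = if p.2.2 ((G.induce R).connectedComponentMk ⟨v, hvR⟩) = side v
            then 1 else 2 := by
        intro v hvR
        obtain ⟨h1, h2, h3, h4⟩ := hRnot v hvR
        have hv : v ∉ E₀ ∪ O₀ := by simp only [Finset.mem_union]; tauto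
        rw [hχ]
        simp only [hv, if_false, h3, dif_neg, not_false_iff, h4, hvR, dif_pos]
      have hval : ∀ v, v ∉ E₀ ∪ O₀ → χ v ≠ 0 := by
        intro v hv
        have hv' := hv
        rw [Finset.mem_union] at hv'
        push_neg at hv'
        by_cases hvI : v ∈ I
        · rw [hIval v hvI]; split <;> decide
        · by_cases hvJ : v ∈ J
          · rw [hJval v hvJ]; split <;> decide
          · have hvR : v ∈ R := (hRmem v).2 ⟨hv'.1, hv'.2, hvI, hvJ⟩
            rw [hRval v hvR]; split <;> decide
      have hzero : ∀ v, χ v = 0 ↔ v ∈ E₀ ∪ O₀ := by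
        intro v
        constructor
        · intro h0; by_contra hv; exact hval v hv h0
        · exact hzval v
      have hproper : ∀ u v, G.Adj u v → χ u ≠ χ v := by
        intro u v huv
        by_cases hu : u ∈ E₀ ∪ O₀
        · have hv : v ∉ E₀ ∪ O₀ := fun hv => hnotboth u v huv hu hv
          rw [hzval u hu]
          exact fun h => hval v hv h.symm
        · by_cases hv : v ∈ E₀ ∪ O₀
          · rw [hzval v hv]
            exact hval u hu
          · rw [Finset.mem_union] at hu hv
            push_neg at hu hv
            have huR : u ∈ R := hadjR u v huv hu.1 hu.2 hv.1 hv.2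
            have hvR : v ∈ R := hadjR v u huv.symm hv.1 hv.2 hu.1 hu.2
            have hcomp : (G.induce R).connectedComponentMk ⟨u, huR⟩ =
                (G.induce R).connectedComponentMk ⟨v, hvR⟩ := by
              apply SimpleGraph.ConnectedComponent.sound
              apply SimpleGraph.Adj.reachable
              simpa using huv
            rw [hRval u huR, hRval v hvR, hcomp]
            exact fin3_if (hbip u v huv)
      refine ⟨⟨χ, hproper, hzero⟩, ?_⟩
      rw [hΦ]
      refine Prod.ext ?_ (Prod.ext ?_ ?_)
      · funext i
        show decide (χ i.1 = 1) = p.1 i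
        rw [hIval i.1 i.2]
        exact fin3_cond (p.1 i)
      · funext j
        show decide (χ j.1 = 1) = p.2.1 j
        rw [hJval j.1 j.2]
        exact fin3_cond (p.2.1 j)
      · funext c
        refine SimpleGraph.ConnectedComponent.ind (fun v => ?_) c
        show decide ((χ v.1 = 1) ↔ side v.1 = true) =
          p.2.2 ((G.induce R).connectedComponentMk v)
        rw [hRval v.1 v.2]
        exact fin3_decode _ _
  rw [Nat.card_eq_of_bijective Φ hbij, Nat.card_prod, Nat.card_prod,
    Nat.card_fun, Nat.card_fun, Nat.card_fun]
  simp only [Nat.card_eq_fintype_card, Fintype.card_coe, Fintype.card_bool]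
  rw [pow_add, pow_add]
  ring
end

section
/- The map Φ sending f to the colouring v ↦ (f(v) mod 3) is a bijection from the set of graph homomorphisms f : Q_d → ℤ with f(v₀) = 0 (i.e., |f(x) − f(y)| = 1 for adjacent x, y) to the set of proper 3-colourings χ of Q_d with χ(v₀) = 0. -/
/-!
Reduction mod 3 turns a homomorphism `Q_d → ℤ` into a proper 3-colouring. Two homomorphisms
with the same reduction that agree at a vertex agree at each of its neighbours (their values
there differ by a multiple of 3 and by at most 2), so on the connected graph `Q_d` they agree.

Conversely, a colouring `χ` is lifted by summing, along the monotone path from `v₀` to `v` that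
switches the coordinates one at a time, the representatives in `{-1, 0, 1}` of the colour
differences. If `x` and `y` differ only in coordinate `i`, their paths coincide up to step `i`
and afterwards run side by side through adjacent vertices. Along this ladder the difference of
the two heights starts at `±1` and changes by `0` or `±2` per rung; as the rungs are properly
coloured it never becomes divisible by 3, so it stays `±1`.
-/

open Finset

theorem eq_of_intCast_zmod_eq {n : ℕ} {a b : ℤ} (hab : (a : ZMod n) = b) (h : |a - b| < n) :
    a = b :=
  sub_eq_zero.mp <|
    Int.eq_zero_of_abs_lt_dvd ((ZMod.intCast_eq_intCast_iff_dvd_sub b a n).mp hab.symm) h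

theorem intCast_zmod_three_ne_of_abs_sub_eq_one {a b : ℤ} (h : |a - b| = 1) :
    (a : ZMod 3) ≠ b :=
  fun hab => by simp [eq_of_intCast_zmod_eq hab (by rw [h]; norm_num)] at h

theorem abs_valMinAbs_zmod_three_le_one (a : ZMod 3) : |a.valMinAbs| ≤ 1 := by
  rw [Int.abs_eq_natAbs]
  exact_mod_cast ZMod.natAbs_valMinAbs_le a

namespace SimpleGraph

variable {V : Type*} {G : SimpleGraph V}

theorem Reachable.eq_of_intCast_zmod_three_eq {f g : V → ℤ}
    (hf : ∀ x y, G.Adj x y → |f x - f y| = 1) (hg : ∀ x y, G.Adj x y → |g x - g y| = 1)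
    (hfg : ∀ v, (f v : ZMod 3) = g v) {u v : V} (huv : G.Reachable u v) (hu : f u = g u) :
    f v = g v := by
  obtain ⟨w⟩ := huv
  induction w with
  | nil => exact hu
  | cons hadj _ ih =>
    refine ih (eq_of_intCast_zmod_eq (hfg _) ?_)
    have := hf _ _ hadj
    have := hg _ _ hadj
    push_cast
    grind

end SimpleGraph

section HeightAlong

variable {V : Type*} {G : SimpleGraph V} {χ : V → ZMod 3} {p q : ℕ → V}

-- `valMinAbs` lifts a colour difference to its representative in `{-1, 0, 1}`.
def heightAlong (χ : V → ZMod 3) (p : ℕ → V) (n : ℕ) : ℤ :=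
  ∑ k ∈ range n, (χ (p (k + 1)) - χ (p k)).valMinAbs

theorem heightAlong_succ (n : ℕ) :
    heightAlong χ p (n + 1) = heightAlong χ p n + (χ (p (n + 1)) - χ (p n)).valMinAbs :=
  sum_range_succ _ _

theorem heightAlong_congr {n : ℕ} (h : ∀ k ≤ n, p k = q k) :
    heightAlong χ p n = heightAlong χ q n :=
  sum_congr rfl fun k hk => by
    rw [mem_range] at hk
    rw [h k hk.le, h (k + 1) hk]

theorem intCast_heightAlong (n : ℕ) : (heightAlong χ p n : ZMod 3) = χ (p n) - χ (p 0) := by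
  simp only [heightAlong, Int.cast_sum, ZMod.coe_valMinAbs]
  exact sum_range_sub (χ ∘ p) n

theorem valMinAbs_sub_eq_zero_iff (hχ : ∀ x y, G.Adj x y → χ x ≠ χ y) {x y : V}
    (h : y = x ∨ G.Adj x y) : (χ y - χ x).valMinAbs = 0 ↔ y = x := by
  rw [ZMod.valMinAbs_eq_zero, sub_eq_zero]
  rcases h with rfl | h
  · simp
  · exact iff_of_false (hχ x y h).symm (G.ne_of_adj h).symm

theorem abs_heightAlong_sub_eq_one (hχ : ∀ x y, G.Adj x y → χ x ≠ χ y)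
    (hp : ∀ k, p (k + 1) = p k ∨ G.Adj (p k) (p (k + 1)))
    (hq : ∀ k, q (k + 1) = q k ∨ G.Adj (q k) (q (k + 1))) (h0 : p 0 = q 0) {m : ℕ}
    (hsync : ∀ k ≥ m, (p (k + 1) = p k ↔ q (k + 1) = q k))
    (hrung : ∀ k > m, G.Adj (p k) (q k))
    (hm : |heightAlong χ p m - heightAlong χ q m| = 1) {n : ℕ} (hn : m ≤ n) :
    |heightAlong χ p n - heightAlong χ q n| = 1 := by
  induction n, hn using Nat.le_induction with
  | base => exact hm
  | succ k hk ih =>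
    have hcolour :
        ((heightAlong χ p (k + 1) - heightAlong χ q (k + 1) : ℤ) : ZMod 3) ≠ 0 := by
      push_cast
      rw [intCast_heightAlong, intCast_heightAlong, h0, sub_sub_sub_cancel_right, sub_ne_zero]
      exact hχ _ _ (hrung _ (by omega))
    rw [Ne, ZMod.intCast_zmod_eq_zero_iff_dvd, heightAlong_succ, heightAlong_succ] at hcolour
    rw [heightAlong_succ, heightAlong_succ]
    have := (valMinAbs_sub_eq_zero_iff hχ (hp k)).trans <| (hsync k hk).trans
      (valMinAbs_sub_eq_zero_iff hχ (hq k)).symm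
    have := abs_valMinAbs_zmod_three_le_one (χ (p (k + 1)) - χ (p k))
    have := abs_valMinAbs_zmod_three_le_one (χ (q (k + 1)) - χ (q k))
    push_cast at hcolour
    -- the two paths move or stay together, so the difference changes by `0` or `±2`
    grind

end HeightAlong

namespace hypercube

variable {d : ℕ} {v₀ v x y : Fin d → Bool} {k : ℕ}

def path (v₀ v : Fin d → Bool) (k : ℕ) : Fin d → Bool :=
  fun i => if (i : ℕ) < k then v i else v₀ i

theorem path_zero : path v₀ v 0 = v₀ := by
  funext i; simp [path]

theorem path_of_le (hk : d ≤ k) : path v₀ v k = v := by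
  funext i; simp [path, i.isLt.trans_le hk]

theorem path_self : path v₀ v₀ k = v₀ := by
  funext i; simp [path]

theorem path_ne_path_iff (i : Fin d) :
    path v₀ x k i ≠ path v₀ y k i ↔ (i : ℕ) < k ∧ x i ≠ y i := by
  unfold path; split_ifs <;> simp [*]

theorem path_succ_ne_iff (i : Fin d) :
    path v₀ v k i ≠ path v₀ v (k + 1) i ↔ (i : ℕ) = k ∧ v i ≠ v₀ i := by
  unfold path; split_ifs <;> grind

theorem path_succ_eq_iff :
    path v₀ v (k + 1) = path v₀ v k ↔ ∀ i : Fin d, (i : ℕ) = k → v i = v₀ i := by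
  rw [funext_iff]
  refine forall_congr' fun i => ?_
  have := path_succ_ne_iff (v₀ := v₀) (v := v) (k := k) i
  grind

theorem path_val_succ_eq_iff (i : Fin d) : path v₀ v (i + 1) = path v₀ v i ↔ v i = v₀ i :=
  path_succ_eq_iff.trans ⟨fun h => h i rfl, fun h _ hj => Fin.ext hj ▸ h⟩

theorem path_succ_eq_or_adj :
    path v₀ v (k + 1) = path v₀ v k ∨
      (hypercube d).Adj (path v₀ v k) (path v₀ v (k + 1)) := by
  refine or_iff_not_imp_left.mpr fun h => ?_
  obtain ⟨i, hik, hi⟩ := by simpa using mt path_succ_eq_iff.mpr h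
  exact ⟨i, (path_succ_ne_iff i).mpr ⟨hik, hi⟩,
    fun j hj => Fin.ext <| ((path_succ_ne_iff j).mp hj).1.trans hik.symm⟩

theorem reachable (u v : Fin d → Bool) : (hypercube d).Reachable u v := by
  have : ∀ k, (hypercube d).Reachable u (path u v k) := by
    intro k
    induction k with
    | zero => rw [path_zero]
    | succ k ih =>
      rcases path_succ_eq_or_adj (v₀ := u) (v := v) (k := k) with h | h
      · rwa [h]
      · exact ih.trans h.reachable
  simpa [path_of_le le_rfl] using this d

def lift (χ : (Fin d → Bool) → ZMod 3) (v₀ v : Fin d → Bool) : ℤ :=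
  heightAlong χ (path v₀ v) d

variable {χ : (Fin d → Bool) → ZMod 3}

theorem intCast_lift : (lift χ v₀ v : ZMod 3) = χ v - χ v₀ := by
  rw [lift, intCast_heightAlong, path_of_le le_rfl, path_zero]

theorem lift_self : lift χ v₀ v₀ = 0 := by
  simp [lift, heightAlong, path_self]

theorem abs_lift_sub_lift (hχ : ∀ x y, (hypercube d).Adj x y → χ x ≠ χ y)
    (hxy : (hypercube d).Adj x y) : |lift χ v₀ x - lift χ v₀ y| = 1 := by
  obtain ⟨i, hi, hu⟩ := hxy
  have hagree : ∀ k ≤ (i : ℕ), path v₀ x k = path v₀ y k := fun k hk => by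
    funext j
    by_contra hj
    have := (path_ne_path_iff j).mp hj
    exact absurd (hu j this.2 ▸ this.1) (by omega)
  refine abs_heightAlong_sub_eq_one hχ (fun _ => path_succ_eq_or_adj)
    (fun _ => path_succ_eq_or_adj) (by rw [path_zero, path_zero]) (m := i + 1) ?_ ?_ ?_ i.isLt
  · intro k hk
    rw [path_succ_eq_iff, path_succ_eq_iff]
    refine forall_congr' fun j => imp_congr_right fun hjk => ?_
    rw [not_imp_comm.mp (hu j) fun hji => by subst hji; omega]
  · intro k hk
    exact ⟨i, (path_ne_path_iff i).mpr ⟨by omega, hi⟩,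
      fun j hj => hu j ((path_ne_path_iff j).mp hj).2⟩
  · have hx : (χ (path v₀ x (i + 1)) - χ (path v₀ x i)).valMinAbs = 0 ↔ x i = v₀ i :=
      (valMinAbs_sub_eq_zero_iff hχ path_succ_eq_or_adj).trans (path_val_succ_eq_iff i)
    have hy : (χ (path v₀ y (i + 1)) - χ (path v₀ y i)).valMinAbs = 0 ↔ y i = v₀ i :=
      (valMinAbs_sub_eq_zero_iff hχ path_succ_eq_or_adj).trans (path_val_succ_eq_iff i)
    have hxy : x i = v₀ i ↔ ¬ y i = v₀ i := by
      revert hi; cases x i <;> cases y i <;> cases v₀ i <;> decide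
    have := abs_valMinAbs_zmod_three_le_one (χ (path v₀ x (i + 1)) - χ (path v₀ x i))
    have := abs_valMinAbs_zmod_three_le_one (χ (path v₀ y (i + 1)) - χ (path v₀ y i))
    rw [heightAlong_succ, heightAlong_succ, heightAlong_congr hagree]
    grind

end hypercube

theorem hom_to_Z_bijection_with_colourings_general (d : ℕ)
    (v₀ : Fin d → Bool) :
    Set.BijOn (fun (f : (Fin d → Bool) → ℤ) => fun v => ((f v : ℤ) : ZMod 3))
      {f : (Fin d → Bool) → ℤ | f v₀ = 0 ∧
        ∀ x y, (hypercube d).Adj x y → |f x - f y| = 1}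
      {χ : (Fin d → Bool) → ZMod 3 | (∀ x y, (hypercube d).Adj x y → χ x ≠ χ y) ∧
        χ v₀ = 0} := by
  refine ⟨?_, ?_, ?_⟩
  · rintro f ⟨hf0, hf⟩
    exact ⟨fun x y hxy => intCast_zmod_three_ne_of_abs_sub_eq_one (hf x y hxy), by simp [hf0]⟩
  · rintro f ⟨hf0, hf⟩ g ⟨hg0, hg⟩ hfg
    funext v
    exact (hypercube.reachable v₀ v).eq_of_intCast_zmod_three_eq hf hg (congrFun hfg)
      (hf0.trans hg0.symm)
  · rintro χ ⟨hχ, hχ0⟩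
    refine ⟨hypercube.lift χ v₀,
      ⟨hypercube.lift_self, fun x y hxy => hypercube.abs_lift_sub_lift hχ hxy⟩, ?_⟩
    funext v
    simp [hypercube.intCast_lift, hχ0]

/-- The map `f ↦ (v ↦ f v mod 3)` is a bijection from the set of graph
homomorphisms `f : Q_d → ℤ` with `f v₀ = 0` to the set of proper 3-colourings
`χ` of `Q_d` with `χ v₀ = 0`. -/
theorem hom_to_Z_bijection_with_colourings (d : ℕ) (hd : 1 ≤ d)
    (v₀ : Fin d → Bool) :
    Set.BijOn (fun (f : (Fin d → Bool) → ℤ) => fun v => ((f v : ℤ) : ZMod 3))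
      {f : (Fin d → Bool) → ℤ | f v₀ = 0 ∧
        ∀ x y, (hypercube d).Adj x y → |f x - f y| = 1}
      {χ : (Fin d → Bool) → ZMod 3 | (∀ x y, (hypercube d).Adj x y → χ x ≠ χ y) ∧
        χ v₀ = 0} :=
  hom_to_Z_bijection_with_colourings_general d v₀
end

section
/- The Glauber dynamics Markov chain on proper 3-colourings of Q_d is irreducible: any proper 3-colouring of Q_d can be transformed into any other by a sequence of single-vertex colour changes, each intermediate step being a proper 3-colouring. -/
/-- A colouring is proper on `Q_d`. -/
def ProperCol (d : ℕ) (χ : (Fin d → Bool) → Fin 3) : Prop :=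
  ∀ x y, (hypercube d).Adj x y → χ x ≠ χ y

/-- One step of Glauber dynamics: change the colour of at most one vertex,
remaining a proper colouring. -/
def GlauberStep (d : ℕ) (χ₁ χ₂ : (Fin d → Bool) → Fin 3) : Prop :=
  ProperCol d χ₁ ∧ ProperCol d χ₂ ∧ ∃ v, ∀ w, w ≠ v → χ₁ w = χ₂ w

/-!
A proper 3-colouring `χ` of `Q_d` lifts to a height function `h`, a graph homomorphism from `Q_d`
to the path `ℤ` with `h ≡ χ mod 3`: sum the increments `±1` of `χ` along a monotone walk from `⊥`.
Walks ending at adjacent vertices are joined by a ladder of 4-cycles, and a proper 3-colouring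
winds zero times around a 4-cycle, so adjacent heights differ by exactly one.

Lowering a global maximum of a height by `2` is a Glauber step. From a nonnegative lift with even
value at `⊥` these steps reach the height `weight % 2`, so every proper colouring reaches one and
the same 2-colouring, and Glauber steps are reversible.
-/

namespace Hypercube

open Relation Finset

variable {d : ℕ}

theorem reflGen_adj_iff {x y : Fin d → Bool} :
    ReflGen (hypercube d).Adj x y ↔ ∀ i j, x i ≠ y i → x j ≠ y j → i = j := by
  constructor
  · rintro (_ | ⟨k, -, hk⟩) i j hi hj
    · exact absurd rfl hi
    · exact (hk i hi).trans (hk j hj).symm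
  · intro h
    by_cases hxy : x = y
    · rw [hxy]
    · obtain ⟨i, hi⟩ := Function.ne_iff.mp hxy
      exact .single ⟨i, hi, fun j hj => h j i hj hi⟩

/-- As `k` runs from `0` to `d`, `truncate k x` walks from `⊥` to `x` through equal or adjacent
vertices. -/
def truncate (k : ℕ) (x : Fin d → Bool) : Fin d → Bool := fun i => decide (i.val < k) && x i

@[simp]
theorem truncate_zero (x : Fin d → Bool) : truncate 0 x = ⊥ := by
  ext i; simp [truncate]

@[simp]
theorem truncate_dim (x : Fin d → Bool) : truncate d x = x := by
  ext i; simp [truncate, i.isLt]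

@[simp]
theorem truncate_bot (k : ℕ) : truncate k (⊥ : Fin d → Bool) = ⊥ := by
  ext i; simp [truncate]

theorem reflGen_truncate_succ (k : ℕ) (x : Fin d → Bool) :
    ReflGen (hypercube d).Adj (truncate k x) (truncate (k + 1) x) := by
  have hk : ∀ i : Fin d, truncate k x i ≠ truncate (k + 1) x i → i.val = k := by
    intro i hi
    simp only [truncate] at hi
    by_contra
    grind
  exact reflGen_adj_iff.mpr fun i j hi hj => Fin.ext ((hk i hi).trans (hk j hj).symm)

theorem reflGen_truncate {x y : Fin d → Bool} (h : ReflGen (hypercube d).Adj x y) (k : ℕ) :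
    ReflGen (hypercube d).Adj (truncate k x) (truncate k y) := by
  refine reflGen_adj_iff.mpr fun i j hi hj => reflGen_adj_iff.mp h i j ?_ ?_
  · rintro h; simp [truncate, h] at hi
  · rintro h; simp [truncate, h] at hj

theorem apply_eq_apply_bot {α : Type*} {f : (Fin d → Bool) → α}
    (hf : ∀ x y, (hypercube d).Adj x y → f x = f y) (x : Fin d → Bool) : f x = f ⊥ := by
  have hf' : ∀ u v, ReflGen (hypercube d).Adj u v → f u = f v := by
    rintro u v (_ | huv)
    exacts [rfl, hf u v huv]
  have key : ∀ k, f (truncate k x) = f ⊥ := by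
    intro k
    induction k with
    | zero => rw [truncate_zero]
    | succ k ih => rw [← hf' _ _ (reflGen_truncate_succ k x), ih]
  simpa using key d

/-- An integer-valued graph homomorphism from `Q_d` to the path `ℤ`. -/
def IsHeight (h : (Fin d → Bool) → ℤ) : Prop :=
  ∀ x y, (hypercube d).Adj x y → (h x - h y).natAbs = 1

def weight (x : Fin d → Bool) : ℤ := ∑ i, ((x i).toNat : ℤ)

@[simp]
theorem weight_bot : weight (⊥ : Fin d → Bool) = 0 := by
  simp [weight]

theorem isHeight_weight : IsHeight (weight (d := d)) := by
  rintro x y ⟨i, hi, hu⟩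
  have hsum : weight x - weight y = (x i).toNat - (y i).toNat := by
    rw [weight, weight, ← sum_sub_distrib]
    refine sum_eq_single i (fun j _ hj => ?_) (by simp)
    rw [not_imp_comm.mp (hu j) hj, sub_self]
  rw [hsum]
  cases hx : x i <;> cases hy : y i <;> simp_all

def colourOf (h : (Fin d → Bool) → ℤ) (x : Fin d → Bool) : Fin 3 :=
  ⟨(h x % 3).toNat, by omega⟩

theorem IsHeight.properCol {h : (Fin d → Bool) → ℤ} (hh : IsHeight h) :
    ProperCol d (colourOf h) := by
  intro x y hxy hc
  have := hh x y hxy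
  simp only [colourOf, Fin.mk.injEq] at hc
  omega

theorem IsHeight.update_sub_two {h : (Fin d → Bool) → ℤ} (hh : IsHeight h) {v : Fin d → Bool}
    (hv : ∀ w, (hypercube d).Adj v w → h w < h v) :
    IsHeight (Function.update h v (h v - 2)) := by
  intro x y hxy
  have hxy' := hh x y hxy
  rcases eq_or_ne x v with rfl | hx
  · have := hv y hxy
    rw [Function.update_self, Function.update_of_ne hxy.ne.symm]
    omega
  rcases eq_or_ne y v with rfl | hy
  · have := hv x hxy.symm
    rw [Function.update_self, Function.update_of_ne hx]
    omega
  rwa [Function.update_of_ne hx, Function.update_of_ne hy]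

theorem IsHeight.sub_weight_emod_two {h : (Fin d → Bool) → ℤ} (hh : IsHeight h)
    (x : Fin d → Bool) : (h x - weight x) % 2 = h ⊥ % 2 := by
  have := apply_eq_apply_bot (f := fun x => (h x - weight x) % 2) (fun x y hxy => by
    have := hh x y hxy
    have := isHeight_weight x y hxy
    omega) x
  simpa using this

theorem glauberStep_colourOf_update {h : (Fin d → Bool) → ℤ} (hh : IsHeight h)
    {v : Fin d → Bool} {n : ℤ} (hh' : IsHeight (Function.update h v n)) :
    GlauberStep d (colourOf h) (colourOf (Function.update h v n)) :=
  ⟨hh.properCol, hh'.properCol, v, fun w hw => by simp [colourOf, Function.update_of_ne hw]⟩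

instance : Std.Symm (GlauberStep d) where
  symm _ _ := fun ⟨h₁, h₂, v, hv⟩ => ⟨h₂, h₁, v, fun w hw => (hv w hw).symm⟩

/-- The representative in `{-1, 0, 1}` of `b - a` modulo `3`. -/
def signedDiff (a b : Fin 3) : ℤ := ((b : ℤ) - a + 1) % 3 - 1

theorem even_signedDiff_sub_weight {χ : (Fin d → Bool) → Fin 3} (hχ : ProperCol d χ)
    {x y : Fin d → Bool} (hxy : ReflGen (hypercube d).Adj x y) :
    Even (signedDiff (χ x) (χ y) - (weight y - weight x)) := by
  rcases hxy with _ | hadj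
  · simp [signedDiff]
  · have hw := isHeight_weight x y hadj
    have hc : ((χ x : ℕ) : ℤ) ≠ (χ y : ℕ) := by exact_mod_cast Fin.val_ne_of_ne (hχ x y hadj)
    rw [Int.even_iff, signedDiff]
    omega

def partialHeight (χ : (Fin d → Bool) → Fin 3) (c : ℤ) : ℕ → (Fin d → Bool) → ℤ
  | 0, _ => c
  | k + 1, x => partialHeight χ c k x + signedDiff (χ (truncate k x)) (χ (truncate (k + 1) x))

theorem partialHeight_emod (χ : (Fin d → Bool) → Fin 3) (c : ℤ) (k : ℕ) (x : Fin d → Bool) :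
    partialHeight χ c k x % 3 = (c - χ ⊥ + χ (truncate k x)) % 3 := by
  induction k with
  | zero => simp [partialHeight]
  | succ k ih => rw [partialHeight, signedDiff]; omega

theorem partialHeight_bot (χ : (Fin d → Bool) → Fin 3) (c : ℤ) (k : ℕ) :
    partialHeight χ c k ⊥ = c := by
  induction k with
  | zero => rfl
  | succ k ih => simp [partialHeight, ih, signedDiff]

theorem sub_le_partialHeight (χ : (Fin d → Bool) → Fin 3) (c : ℤ) (k : ℕ) (x : Fin d → Bool) :
    c - k ≤ partialHeight χ c k x := by
  induction k with
  | zero => simp [partialHeight]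
  | succ k ih => rw [partialHeight, signedDiff]; omega

/-- The walks to `x` and `y` stay equal or adjacent at each time `k`. Around each square of this
ladder the signed sum of the four increments vanishes modulo `3` (colours) and modulo `2`
(weights) and lies in `[-4, 4]`, so it is `0`. -/
theorem partialHeight_sub_partialHeight {χ : (Fin d → Bool) → Fin 3} (hχ : ProperCol d χ)
    (c : ℤ) {x y : Fin d → Bool} (hxy : (hypercube d).Adj x y) (k : ℕ) :
    partialHeight χ c k y - partialHeight χ c k x =
      signedDiff (χ (truncate k x)) (χ (truncate k y)) := by
  induction k with
  | zero => simp [partialHeight, signedDiff]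
  | succ k ih =>
    have hx := even_signedDiff_sub_weight hχ (reflGen_truncate_succ k x)
    have hy := even_signedDiff_sub_weight hχ (reflGen_truncate_succ k y)
    have hk := even_signedDiff_sub_weight hχ (reflGen_truncate (.single hxy) k)
    have hk' := even_signedDiff_sub_weight hχ (reflGen_truncate (.single hxy) (k + 1))
    rw [Int.even_iff] at hx hy hk hk'
    simp only [partialHeight, signedDiff] at ih hx hy hk hk' ⊢
    omega

def liftHeight (χ : (Fin d → Bool) → Fin 3) (c : ℤ) : (Fin d → Bool) → ℤ :=
  partialHeight χ c d

theorem isHeight_liftHeight {χ : (Fin d → Bool) → Fin 3} (hχ : ProperCol d χ) (c : ℤ) :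
    IsHeight (liftHeight χ c) := by
  intro x y hxy
  have h := partialHeight_sub_partialHeight hχ c hxy d
  have hc : ((χ x : ℕ) : ℤ) ≠ (χ y : ℕ) := by exact_mod_cast Fin.val_ne_of_ne (hχ x y hxy)
  simp only [truncate_dim, signedDiff] at h
  unfold liftHeight
  omega

theorem colourOf_liftHeight (χ : (Fin d → Bool) → Fin 3) {c : ℤ} (hc : c % 3 = χ ⊥) :
    colourOf (liftHeight χ c) = χ := by
  ext x
  have h := partialHeight_emod χ c d x
  simp only [truncate_dim] at h
  simp only [colourOf, liftHeight]
  omega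

theorem exists_isHeight_colourOf_eq {χ : (Fin d → Bool) → Fin 3} (hχ : ProperCol d χ) :
    ∃ h, IsHeight h ∧ colourOf h = χ ∧ Even (h ⊥) ∧ ∀ x, 0 ≤ h x := by
  -- an even base value `≡ χ ⊥ mod 3` that is large enough to keep the lift nonnegative
  set c : ℤ := 4 * (χ ⊥ : ℕ) + 6 * d
  refine ⟨liftHeight χ c, isHeight_liftHeight hχ c, colourOf_liftHeight χ (by omega), ?_,
    fun x => ?_⟩
  · rw [liftHeight, partialHeight_bot, Int.even_iff]
    omega
  · have := sub_le_partialHeight χ c d x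
    rw [liftHeight]
    omega

theorem IsHeight.reflTransGen_colourOf_weight_emod_two {h : (Fin d → Bool) → ℤ}
    (hh : IsHeight h) (hbot : Even (h ⊥)) (hnonneg : ∀ x, 0 ≤ h x) :
    ReflTransGen (GlauberStep d) (colourOf h) (colourOf fun x => weight x % 2) := by
  induction hs : (∑ x, h x).toNat using Nat.strong_induction_on generalizing h with
  | _ n ih =>
  obtain ⟨v, -, hv⟩ := exists_max_image univ h univ_nonempty
  by_cases hflat : h v ≤ 1
  · suffices h = fun x => weight x % 2 by rw [this]
    ext x
    have := hh.sub_weight_emod_two x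
    have := hv x (mem_univ x)
    have := hnonneg x
    rw [Int.even_iff] at hbot
    omega
  · have hh' := hh.update_sub_two (v := v) fun w hw => by
      have := hh v w hw
      have := hv w (mem_univ w)
      omega
    refine .head (glauberStep_colourOf_update hh hh') (ih _ ?_ hh' ?_ ?_ rfl)
    · have : 0 ≤ ∑ x ∈ univ.erase v, h x := sum_nonneg fun x _ => hnonneg x
      rw [← hs, sum_update_of_mem (mem_univ v), sdiff_singleton_eq_erase,
        ← add_sum_erase univ h (mem_univ v)]
      omega
    · rcases eq_or_ne ⊥ v with rfl | hne
      · simpa [Int.even_sub] using hbot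
      · rwa [Function.update_of_ne hne]
    · intro x
      rcases eq_or_ne x v with rfl | hne
      · rw [Function.update_self]
        omega
      · rw [Function.update_of_ne hne]; exact hnonneg x

theorem reflTransGen_colourOf_weight_emod_two {χ : (Fin d → Bool) → Fin 3}
    (hχ : ProperCol d χ) :
    ReflTransGen (GlauberStep d) χ (colourOf fun x => weight x % 2) := by
  obtain ⟨h, hh, rfl, hbot, hnonneg⟩ := exists_isHeight_colourOf_eq hχ
  exact hh.reflTransGen_colourOf_weight_emod_two hbot hnonneg

end Hypercube

theorem glauber_three_colourings_irreducible_general (d : ℕ)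
    (χ₁ χ₂ : (Fin d → Bool) → Fin 3)
    (h₁ : ProperCol d χ₁) (h₂ : ProperCol d χ₂) :
    Relation.ReflTransGen (GlauberStep d) χ₁ χ₂ :=
  (Hypercube.reflTransGen_colourOf_weight_emod_two h₁).trans
    (symm (Hypercube.reflTransGen_colourOf_weight_emod_two h₂))

/-- Glauber dynamics on proper 3-colourings of `Q_d` is irreducible: any proper
3-colouring can be transformed into any other by single-vertex recolourings,
each intermediate colouring being proper. -/
theorem glauber_three_colourings_irreducible (d : ℕ) (hd : 1 ≤ d)
    (χ₁ χ₂ : (Fin d → Bool) → Fin 3)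
    (h₁ : ProperCol d χ₁) (h₂ : ProperCol d χ₂) :
    Relation.ReflTransGen (GlauberStep d) χ₁ χ₂ :=
  glauber_three_colourings_irreducible_general d χ₁ χ₂ h₁ h₂
end

section
/- There exists a proper 4-colouring χ of Q_3 that is frozen: for every vertex v and every colour j ≠ χ(v), changing χ at v to j produces an improper colouring (equivalently, every colour in {0,1,2,3} appears in the closed neighbourhood of every vertex). -/
-- `∃!` has no `Decidable` instance, so adjacency is unfolded by hand.
instance (d : ℕ) : DecidableRel (hypercube d).Adj :=
  fun x y => inferInstanceAs (Decidable (∃ i, x i ≠ y i ∧ ∀ j, x j ≠ y j → j = i))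


theorem SimpleGraph.not_proper_update_of_forall_exists_adj {V α : Type*} [DecidableEq V]
    (G : SimpleGraph V) {χ : V → α} (hχ : ∀ v c, c ≠ χ v → ∃ w, G.Adj v w ∧ χ w = c)
    {v : V} {j : α} (hj : j ≠ χ v) :
    ¬ ∀ x y, G.Adj x y → Function.update χ v j x ≠ Function.update χ v j y := by
  obtain ⟨w, hvw, rfl⟩ := hχ v j hj
  intro hproper
  apply hproper v w hvw
  rw [Function.update_self, Function.update_of_ne hvw.ne']

def foldedCubeColouring (x : Fin 3 → Bool) : Fin 4 :=
  (if x 0 ≠ x 2 then 2 else 0) + (if x 1 ≠ x 2 then 1 else 0)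

theorem foldedCubeColouring_ne_of_adj :
    ∀ x y, (hypercube 3).Adj x y → foldedCubeColouring x ≠ foldedCubeColouring y := by
  decide

theorem exists_adj_foldedCubeColouring_eq :
    ∀ v c, c ≠ foldedCubeColouring v → ∃ w, (hypercube 3).Adj v w ∧ foldedCubeColouring w = c := by
  decide

/-- There is a frozen proper 4-colouring of `Q_3`: changing the colour of any
single vertex always yields an improper colouring. -/
theorem exists_frozen_four_colouring_Q3 :
    ∃ χ : (Fin 3 → Bool) → Fin 4,
      (∀ x y, (hypercube 3).Adj x y → χ x ≠ χ y) ∧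
      ∀ (v : Fin 3 → Bool) (j : Fin 4), j ≠ χ v →
        ¬ (∀ x y, (hypercube 3).Adj x y →
            Function.update χ v j x ≠ Function.update χ v j y) :=
  ⟨foldedCubeColouring, foldedCubeColouring_ne_of_adj, fun _ _ hj =>
    (hypercube 3).not_proper_update_of_forall_exists_adj exists_adj_foldedCubeColouring_eq hj⟩
end

section
/- Let Σ be a regular bipartite graph with partition classes 𝓔 and 𝓞 of equal size M. For any proper 3-colouring χ of Σ with E = χ^{-1}(0) ∩ 𝓔 and O = χ^{-1}(0) ∩ 𝓞, at least one of E, O is small; i.e., at least one of |[E]| ≤ M/2, |[O]| ≤ M/2 holds, where [A] = {x : N(x) ⊆ N(A)}. -/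
/-- For a `d`-regular bipartite graph with partition classes of equal size `M`
and a proper 3-colouring `χ`, with `E₀ = χ⁻¹(0) ∩ 𝓔` and `O₀ = χ⁻¹(0) ∩ 𝓞`,
at least one of `|[E₀]| ≤ M/2`, `|[O₀]| ≤ M/2` holds, where
`[A] = {x : N(x) ⊆ N(A)}`. -/
theorem one_class_is_small
    {V : Type*} [Fintype V] [DecidableEq V] (G : SimpleGraph V) [DecidableRel G.Adj]
    (d : ℕ) (hd : 1 ≤ d) (hreg : G.IsRegularOfDegree d)
    (side : V → Bool) (hbip : ∀ u v, G.Adj u v → side u ≠ side v)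
    (M : ℕ)
    (hcard : (Finset.univ.filter fun v => side v = true).card = M ∧
             (Finset.univ.filter fun v => side v = false).card = M)
    (χ : V → Fin 3) (hχ : ∀ u v, G.Adj u v → χ u ≠ χ v)
    (E₀ O₀ : Finset V)
    (hE : E₀ = Finset.univ.filter fun v => χ v = 0 ∧ side v = true)
    (hO : O₀ = Finset.univ.filter fun v => χ v = 0 ∧ side v = false)
    (ext : Finset V → Finset V)
    (hext : ∀ A, ext A = Finset.univ.filter fun x =>
      G.neighborFinset x ⊆ A.biUnion fun a => G.neighborFinset a) :
    2 * (ext E₀).card ≤ M ∨ 2 * (ext O₀).card ≤ M := by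
  by_contra hcon
  push_neg at hcon
  obtain ⟨hE2, hO2⟩ := hcon
  obtain ⟨hMt, hMf⟩ := hcard
  set NE := E₀.biUnion (fun a => G.neighborFinset a) with hNEdef
  set NO := O₀.biUnion (fun a => G.neighborFinset a) with hNOdef
  -- expansion: |X| ≤ |N(X)| by double counting (regularity)
  have expand : ∀ X : Finset V, X.card ≤ (X.biUnion fun a => G.neighborFinset a).card := by
    intro X
    set NX := X.biUnion fun a => G.neighborFinset a with hNX
    have key : d * X.card ≤ d * NX.card := by
      have h1 : d * X.card = ∑ x ∈ X, ∑ v ∈ NX, (if G.Adj x v then 1 else 0) := by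
        rw [mul_comm, ← Finset.sum_const_nat (m := d)]
        intro x hx
        have hsub : G.neighborFinset x ⊆ NX :=
          Finset.subset_biUnion_of_mem (fun a => G.neighborFinset a) hx
        have hfe : NX.filter (fun v => G.Adj x v) = G.neighborFinset x := by
          ext v
          simp only [Finset.mem_filter, SimpleGraph.mem_neighborFinset]
          exact ⟨fun h => h.2, fun h => ⟨hsub (by simpa using h), h⟩⟩
        rw [← Finset.card_filter, hfe, SimpleGraph.card_neighborFinset_eq_degree, hreg x]
      have h2 : ∑ x ∈ X, ∑ v ∈ NX, (if G.Adj x v then 1 else 0)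
          = ∑ v ∈ NX, ∑ x ∈ X, (if G.Adj x v then 1 else 0) := Finset.sum_comm
      have h3 : ∀ v ∈ NX, ∑ x ∈ X, (if G.Adj x v then 1 else 0) ≤ d := by
        intro v _
        rw [← Finset.card_filter]
        calc (X.filter fun x => G.Adj x v).card
            ≤ (G.neighborFinset v).card := by
              apply Finset.card_le_card
              intro x hx
              simp only [Finset.mem_filter] at hx
              simp [SimpleGraph.mem_neighborFinset, hx.2.symm]
          _ = d := by rw [SimpleGraph.card_neighborFinset_eq_degree]; exact hreg v
      calc d * X.card = ∑ v ∈ NX, ∑ x ∈ X, (if G.Adj x v then 1 else 0) := by rw [h1, h2]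
        _ ≤ ∑ v ∈ NX, d := Finset.sum_le_sum h3
        _ = d * NX.card := by rw [Finset.sum_const, smul_eq_mul, mul_comm]
    exact Nat.le_of_mul_le_mul_left key hd
  -- |ext E₀| ≤ |NE|
  have hEexp : (ext E₀).card ≤ NE.card := by
    refine le_trans (expand (ext E₀)) (Finset.card_le_card ?_)
    intro v hv
    rw [Finset.mem_biUnion] at hv
    obtain ⟨x, hx, hvx⟩ := hv
    rw [hext] at hx
    simp only [Finset.mem_filter] at hx
    exact hx.2 hvx
  -- NE is on the false side
  have hNEside : NE ⊆ Finset.univ.filter fun v => side v = false := by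
    intro v hv
    rw [Finset.mem_biUnion] at hv
    obtain ⟨e, he, hve⟩ := hv
    rw [hE] at he
    simp only [Finset.mem_filter] at he
    rw [SimpleGraph.mem_neighborFinset] at hve
    have := hbip e v hve
    simp only [Finset.mem_filter, Finset.mem_univ, true_and]
    rw [he.2.2] at this
    exact (Bool.not_eq_true _).mp (Ne.symm this)
  -- ext O₀ is on the false side
  have hOside : ext O₀ ⊆ Finset.univ.filter fun v => side v = false := by
    intro x hx
    rw [hext] at hx
    simp only [Finset.mem_filter] at hx
    have hne : (G.neighborFinset x).Nonempty := by
      rw [← Finset.card_pos, SimpleGraph.card_neighborFinset_eq_degree, hreg x]; omega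
    obtain ⟨y, hy⟩ := hne
    have hyNO : y ∈ NO := hx.2 hy
    rw [Finset.mem_biUnion] at hyNO
    obtain ⟨o, ho, hyo⟩ := hyNO
    rw [hO] at ho
    simp only [Finset.mem_filter] at ho
    rw [SimpleGraph.mem_neighborFinset] at hyo
    have hsy : side y = true := by
      have := hbip o y hyo
      rw [ho.2.2] at this
      cases hb : side y with
      | false => exact absurd hb.symm this
      | true => rfl
    rw [SimpleGraph.mem_neighborFinset] at hy
    have := hbip x y hy
    rw [hsy] at this
    simp only [Finset.mem_filter, Finset.mem_univ, true_and]
    exact (Bool.not_eq_true _).mp this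
  -- intersection nonempty
  have hunion : (NE ∪ ext O₀).card ≤ M := by
    rw [← hMf]
    exact Finset.card_le_card (Finset.union_subset hNEside hOside)
  have hie := Finset.card_union_add_card_inter NE (ext O₀)
  have hpos : 0 < (NE ∩ ext O₀).card := by omega
  obtain ⟨y, hy⟩ := Finset.card_pos.mp hpos
  rw [Finset.mem_inter] at hy
  obtain ⟨hyNE, hyO⟩ := hy
  -- derive contradiction
  rw [Finset.mem_biUnion] at hyNE
  obtain ⟨e, he, hye⟩ := hyNE
  rw [hE] at he
  simp only [Finset.mem_filter] at he
  rw [SimpleGraph.mem_neighborFinset] at hye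
  rw [hext] at hyO
  simp only [Finset.mem_filter] at hyO
  have heN : e ∈ G.neighborFinset y := by
    rw [SimpleGraph.mem_neighborFinset]; exact hye.symm
  have heNO : e ∈ NO := hyO.2 heN
  rw [Finset.mem_biUnion] at heNO
  obtain ⟨o, ho, heo⟩ := heNO
  rw [hO] at ho
  simp only [Finset.mem_filter] at ho
  rw [SimpleGraph.mem_neighborFinset] at heo
  exact hχ o e heo (ho.2.1.trans he.2.1.symm)
end

section
/- Let M be an ergodic Markov chain on a finite state space Ω with transition matrix P and stationary distribution π. Suppose A ⊆ Ω and M₀ ⊆ Ω \ A satisfy π(A) ≤ 1/2 and P(ω₁, ω₂) = 0 whenever ω₁ ∈ A and ω₂ ∈ Ω \ (A ∪ M₀). Then the mixing time τ of the chain (the least t such that the total variation distance of P^t from π, maximized over starting states, is at most 1/e) satisfies τ ≥ π(A)/(8 π(M₀)). -/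
/-!
Started from `π` restricted to `A`, the chain can leave `A` only by entering `M₀`, and by
stationarity at most `π(M₀)` of mass enters `M₀` from `A` in one step; so
`∑_{ω ∈ A} π(ω) P^t(ω, Aᶜ) ≤ t π(M₀)`. At the mixing time `τ` each row `P^τ(ω, ·)` is within
`1/e ≤ 3/8` of `π` in total variation, hence `P^τ(ω, Aᶜ) ≥ π(Aᶜ) - 3/8 ≥ 1/8`, and comparing
gives `π(A) / 8 ≤ τ π(M₀)`.

That `τ` is not the junk value `sInf ∅ = 0` is Doeblin's argument: some power of `P` dominates
`ε π` entrywise, and such a matrix contracts the `ℓ¹` distance to `π` by the factor `1 - ε`.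
-/

open Finset Matrix

section Contraction

variable {Ω : Type*} [Fintype Ω]

theorem sum_abs_vecMul_le_of_forall_mul_le {R : Matrix Ω Ω ℝ} {ν d : Ω → ℝ} {ε : ℝ}
    (hR : ∀ x, ∑ y, R x y = 1) (hν : ∑ y, ν y = 1) (hRν : ∀ x y, ε * ν y ≤ R x y)
    (hd : ∑ x, d x = 0) :
    ∑ y, |(d ᵥ* R) y| ≤ (1 - ε) * ∑ x, |d x| := by
  have hcentre : ∀ y, (d ᵥ* R) y = ∑ x, d x * (R x y - ε * ν y) := fun y => by
    simp only [vecMul, dotProduct, mul_sub, sum_sub_distrib, ← sum_mul, hd, zero_mul, sub_zero]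
  calc ∑ y, |(d ᵥ* R) y|
      ≤ ∑ y, ∑ x, |d x| * (R x y - ε * ν y) := by
        gcongr with y
        rw [hcentre]
        refine (abs_sum_le_sum_abs _ _).trans_eq (sum_congr rfl fun x _ => ?_)
        rw [abs_mul, abs_of_nonneg (sub_nonneg.2 (hRν x y))]
    _ = (1 - ε) * ∑ x, |d x| := by
        rw [sum_comm, mul_sum]
        refine sum_congr rfl fun x _ => ?_
        rw [← mul_sum, sum_sub_distrib, hR, ← mul_sum, hν]
        ring

theorem sum_abs_sub_le_two {μ ν : Ω → ℝ} (hμ0 : ∀ x, 0 ≤ μ x) (hμ1 : ∑ x, μ x = 1)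
    (hν0 : ∀ x, 0 ≤ ν x) (hν1 : ∑ x, ν x = 1) :
    ∑ x, |μ x - ν x| ≤ 2 :=
  calc ∑ x, |μ x - ν x|
      ≤ ∑ x, (μ x + ν x) := sum_le_sum fun x _ =>
        abs_sub_le_iff.2 ⟨by linarith [hν0 x], by linarith [hμ0 x]⟩
    _ = 2 := by rw [sum_add_distrib, hμ1, hν1]; norm_num

theorem sum_sub_le_half_sum_abs_sub [DecidableEq Ω] {μ ν : Ω → ℝ}
    (h : ∑ x, μ x = ∑ x, ν x) (S : Finset Ω) :
    ∑ x ∈ S, (ν x - μ x) ≤ 1 / 2 * ∑ x, |μ x - ν x| := by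
  have hzero : ∑ x ∈ S, (ν x - μ x) + ∑ x ∈ Sᶜ, (ν x - μ x) = 0 := by
    rw [sum_add_sum_compl, sum_sub_distrib, h, sub_self]
  have hS : ∑ x ∈ S, (ν x - μ x) ≤ ∑ x ∈ S, |μ x - ν x| :=
    sum_le_sum fun x _ => abs_sub_comm (μ x) (ν x) ▸ le_abs_self _
  have hSc : -∑ x ∈ Sᶜ, (ν x - μ x) ≤ ∑ x ∈ Sᶜ, |μ x - ν x| := by
    rw [← sum_neg_distrib]
    exact sum_le_sum fun x _ => neg_sub (ν x) (μ x) ▸ le_abs_self _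
  linarith [sum_add_sum_compl S fun x => |μ x - ν x|]

end Contraction

section Powers

variable {Ω : Type*} [Fintype Ω] [DecidableEq Ω] {P : Matrix Ω Ω ℝ} {π : Ω → ℝ}

theorem vecMul_pow_eq_self (hπ : π ᵥ* P = π) (t : ℕ) : π ᵥ* P ^ t = π := by
  induction t with
  | zero => simp
  | succ t ih => rw [pow_succ, ← vecMul_vecMul, ih, hπ]

theorem sum_abs_pow_apply_sub_le {ε : ℝ} (hP : P ∈ rowStochastic ℝ Ω)
    (hπ0 : ∀ x, 0 ≤ π x) (hπ1 : ∑ x, π x = 1) (hπ : π ᵥ* P = π)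
    (hPπ : ∀ x y, ε * π y ≤ P x y) (ω : Ω) (k : ℕ) :
    ∑ y, |(P ^ k) ω y - π y| ≤ 2 * (1 - ε) ^ k := by
  have hε : ε ≤ 1 := by
    have := sum_le_sum fun y (_ : y ∈ univ) => hPπ ω y
    rwa [← mul_sum, hπ1, mul_one, sum_row_of_mem_rowStochastic hP] at this
  induction k with
  | zero =>
    simpa using sum_abs_sub_le_two (fun y => nonneg_of_mem_rowStochastic (rowStochastic ℝ Ω).one_mem)
      (sum_row_of_mem_rowStochastic (rowStochastic ℝ Ω).one_mem ω) hπ0 hπ1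
  | succ k ih =>
    have hrow : (P ^ (k + 1)) ω - π = ((P ^ k) ω - π) ᵥ* P := by
      rw [sub_vecMul, hπ, pow_succ, mul_apply_eq_vecMul]
    have hd : ∑ x, ((P ^ k) ω - π) x = 0 := by
      simp [sum_sub_distrib, sum_row_of_mem_rowStochastic (pow_mem hP k), hπ1]
    calc ∑ y, |(P ^ (k + 1)) ω y - π y|
        = ∑ y, |(((P ^ k) ω - π) ᵥ* P) y| := by simp only [← hrow, Pi.sub_apply]
      _ ≤ (1 - ε) * ∑ x, |(P ^ k) ω x - π x| :=
        sum_abs_vecMul_le_of_forall_mul_le (sum_row_of_mem_rowStochastic hP) hπ1 hPπ hd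
      _ ≤ (1 - ε) * (2 * (1 - ε) ^ k) := by gcongr
      _ = 2 * (1 - ε) ^ (k + 1) := by ring

theorem exists_forall_half_sum_abs_pow_sub_le (hP : P ∈ rowStochastic ℝ Ω)
    (hπ0 : ∀ x, 0 ≤ π x) (hπ1 : ∑ x, π x = 1) (hπ : π ᵥ* P = π)
    (hpos : ∃ t, ∀ x y, 0 < (P ^ t) x y) {δ : ℝ} (hδ : 0 < δ) :
    ∃ t, ∀ ω, 1 / 2 * ∑ y, |(P ^ t) ω y - π y| ≤ δ := by
  obtain ⟨t₀, ht₀⟩ := hpos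
  obtain ⟨⟨ε, hε⟩, hεP⟩ := Finite.exists_ge fun p : Ω × Ω =>
    (⟨(P ^ t₀) p.1 p.2, ht₀ p.1 p.2⟩ : Set.Ioi (0 : ℝ))
  have hπ_le_one : ∀ y, π y ≤ 1 := fun y =>
    hπ1 ▸ single_le_sum (fun x _ => hπ0 x) (mem_univ y)
  have hPπ : ∀ x y, ε * π y ≤ (P ^ t₀) x y := fun x y =>
    (mul_le_of_le_one_right (le_of_lt hε) (hπ_le_one y)).trans (hεP (x, y))
  obtain ⟨k, hk⟩ := exists_pow_lt_of_lt_one hδ (sub_lt_self 1 hε)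
  refine ⟨t₀ * k, fun ω => ?_⟩
  have hdecay := sum_abs_pow_apply_sub_le (pow_mem hP t₀) hπ0 hπ1 (vecMul_pow_eq_self hπ t₀)
    hPπ ω k
  rw [← pow_mul] at hdecay
  linarith

end Powers

section Escape

variable {Ω : Type*} [Fintype Ω] [DecidableEq Ω] {P : Matrix Ω Ω ℝ} {π : Ω → ℝ}
  {A M₀ : Finset Ω}

theorem sum_mul_mulVec_le_add (hP0 : ∀ x y, 0 ≤ P x y) (hπ0 : ∀ x, 0 ≤ π x)
    (hπ : π ᵥ* P = π) (hblock : ∀ x ∈ A, ∀ y, y ∉ A → y ∉ M₀ → P x y = 0)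
    {g : Ω → ℝ} (hg0 : ∀ y, 0 ≤ g y) (hg1 : ∀ y, g y ≤ 1) :
    ∑ x ∈ A, π x * (P *ᵥ g) x ≤ ∑ y ∈ A, π y * g y + ∑ y ∈ M₀, π y := by
  set inflow : Ω → ℝ := fun y => ∑ x ∈ A, π x * P x y
  have hinflow0 : ∀ y, 0 ≤ inflow y := fun y =>
    sum_nonneg fun x _ => mul_nonneg (hπ0 x) (hP0 x y)
  have hinflow_le : ∀ y, inflow y ≤ π y := fun y =>
    (congrFun hπ y).le.trans' <| sum_le_sum_of_subset_of_nonneg (subset_univ A)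
      fun x _ _ => mul_nonneg (hπ0 x) (hP0 x y)
  have houtside : ∀ y ∈ Aᶜ, inflow y * g y ≤ if y ∈ M₀ then π y else 0 := by
    intro y hy
    split_ifs with hyM
    · exact (mul_le_of_le_one_right (hinflow0 y) (hg1 y)).trans (hinflow_le y)
    · have : inflow y = 0 :=
        sum_eq_zero fun x hx => by rw [hblock x hx y (mem_compl.1 hy) hyM, mul_zero]
      rw [this, zero_mul]
  calc ∑ x ∈ A, π x * (P *ᵥ g) x
      = ∑ y, inflow y * g y := by
        simp only [inflow, mulVec, dotProduct, mul_sum, sum_mul, mul_assoc]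
        exact sum_comm
    _ = ∑ y ∈ A, inflow y * g y + ∑ y ∈ Aᶜ, inflow y * g y := (sum_add_sum_compl A _).symm
    _ ≤ ∑ y ∈ A, π y * g y + ∑ y, if y ∈ M₀ then π y else 0 := by
        gcongr with y
        · exact hg0 y
        · exact hinflow_le y
        · exact (sum_le_sum houtside).trans <| sum_le_sum_of_subset_of_nonneg (subset_univ _)
            fun y _ _ => by split_ifs <;> simp [hπ0 y]
    _ = ∑ y ∈ A, π y * g y + ∑ y ∈ M₀, π y := by rw [sum_ite_mem, univ_inter]

theorem sum_mul_sum_compl_pow_le (hP : P ∈ rowStochastic ℝ Ω) (hπ0 : ∀ x, 0 ≤ π x)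
    (hπ : π ᵥ* P = π) (hblock : ∀ x ∈ A, ∀ y, y ∉ A → y ∉ M₀ → P x y = 0) (t : ℕ) :
    ∑ x ∈ A, π x * ∑ y ∈ Aᶜ, (P ^ t) x y ≤ t * ∑ y ∈ M₀, π y := by
  induction t with
  | zero =>
    rw [Nat.cast_zero, zero_mul]
    refine le_of_eq (sum_eq_zero fun x hx => ?_)
    rw [pow_zero, sum_eq_zero fun y hy => one_apply_ne (ne_of_mem_of_not_mem hx (mem_compl.1 hy)),
      mul_zero]
  | succ t ih =>
    set escape : Ω → ℝ := fun z => ∑ y ∈ Aᶜ, (P ^ t) z y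
    have hstep : ∀ x, ∑ y ∈ Aᶜ, (P ^ (t + 1)) x y = (P *ᵥ escape) x := fun x => by
      simp only [escape, pow_succ', mul_apply, mulVec, dotProduct, mul_sum]
      exact sum_comm
    have hescape0 : ∀ z, 0 ≤ escape z := fun z =>
      sum_nonneg fun y _ => nonneg_of_mem_rowStochastic (pow_mem hP t)
    have hescape1 : ∀ z, escape z ≤ 1 := fun z =>
      sum_row_of_mem_rowStochastic (pow_mem hP t) z ▸ sum_le_sum_of_subset_of_nonneg
        (subset_univ _) fun y _ _ => nonneg_of_mem_rowStochastic (pow_mem hP t)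
    simp only [hstep]
    push_cast
    linarith [sum_mul_mulVec_le_add (fun _ _ => nonneg_of_mem_rowStochastic hP) hπ0 hπ hblock
      hescape0 hescape1]

end Escape

theorem conductance_mixing_lower_bound_general
    {Ω : Type*} [Fintype Ω] [DecidableEq Ω]
    (P : Matrix Ω Ω ℝ)
    (hP0 : ∀ ω ω', 0 ≤ P ω ω') (hP1 : ∀ ω, ∑ ω', P ω ω' = 1)
    (π : Ω → ℝ) (hπ0 : ∀ ω, 0 ≤ π ω) (hπ1 : ∑ ω, π ω = 1)
    (hstat : ∀ ω', ∑ ω, π ω * P ω ω' = π ω')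
    (hergodic : ∃ t : ℕ, ∀ ω ω', 0 < (P ^ t) ω ω')
    (A M₀ : Finset Ω)
    (hA : ∑ ω ∈ A, π ω ≤ 1 / 2)
    (hblock : ∀ ω₁ ∈ A, ∀ ω₂, ω₂ ∉ A → ω₂ ∉ M₀ → P ω₁ ω₂ = 0)
    (τ : ℕ)
    (hτ : τ = sInf {t : ℕ | ∀ ω : Ω,
      (1 / 2) * ∑ ω', |(P ^ t) ω ω' - π ω'| ≤ (Real.exp 1)⁻¹}) :
    (∑ ω ∈ A, π ω) / (8 * ∑ ω ∈ M₀, π ω) ≤ (τ : ℝ) := by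
  have hP : P ∈ rowStochastic ℝ Ω := mem_rowStochastic_iff_sum.2 ⟨hP0, hP1⟩
  have hπ : π ᵥ* P = π := funext hstat
  have hmix : ∀ ω, 1 / 2 * ∑ ω', |(P ^ τ) ω ω' - π ω'| ≤ (Real.exp 1)⁻¹ :=
    hτ ▸ Nat.sInf_mem (exists_forall_half_sum_abs_pow_sub_le hP hπ0 hπ1 hπ hergodic
      (by positivity))
  have he : (Real.exp 1)⁻¹ ≤ 3 / 8 := by
    rw [inv_le_comm₀ (Real.exp_pos 1) (by norm_num)]
    linarith [Real.exp_one_gt_d9]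
  have hleave : ∀ ω, 1 / 8 ≤ ∑ ω' ∈ Aᶜ, (P ^ τ) ω ω' := fun ω => by
    have hcompl : ∑ ω' ∈ Aᶜ, π ω' = 1 - ∑ ω' ∈ A, π ω' := by
      rw [← hπ1, ← sum_add_sum_compl A π]; ring
    have hTV := sum_sub_le_half_sum_abs_sub
      (by rw [sum_row_of_mem_rowStochastic (pow_mem hP τ), hπ1]) Aᶜ (μ := (P ^ τ) ω) (ν := π)
    rw [sum_sub_distrib] at hTV
    linarith [hmix ω]
  have hmass : (∑ ω ∈ A, π ω) / 8 ≤ τ * ∑ ω ∈ M₀, π ω :=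
    calc (∑ ω ∈ A, π ω) / 8 = ∑ ω ∈ A, π ω * (1 / 8) := by rw [← sum_mul]; ring
      _ ≤ ∑ ω ∈ A, π ω * ∑ ω' ∈ Aᶜ, (P ^ τ) ω ω' := by
        gcongr with ω
        exacts [hπ0 ω, hleave ω]
      _ ≤ τ * ∑ ω ∈ M₀, π ω := sum_mul_sum_compl_pow_le hP hπ0 hπ hblock τ
  refine div_le_of_le_mul₀ (mul_nonneg (by norm_num) (sum_nonneg fun ω _ => hπ0 ω))
    τ.cast_nonneg ?_
  linarith

/-- Conductance (bottleneck) lower bound on mixing time (Dyer–Frieze–Jerrum).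
Let `P` be the transition matrix of an ergodic Markov chain on a finite state
space `Ω` with stationary distribution `π`.  If `A ⊆ Ω` and `M₀ ⊆ Ω \ A`
satisfy `π(A) ≤ 1/2` and `P(ω₁,ω₂) = 0` whenever `ω₁ ∈ A` and
`ω₂ ∈ Ω \ (A ∪ M₀)`, then the mixing time `τ` (least `t` such that the total
variation distance of `P^t` from `π`, maximised over starting states, is at
most `1/e`) satisfies `τ ≥ π(A) / (8 π(M₀))`. -/
theorem conductance_mixing_lower_bound
    {Ω : Type*} [Fintype Ω] [DecidableEq Ω] [Nonempty Ω]
    (P : Matrix Ω Ω ℝ)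
    (hP0 : ∀ ω ω', 0 ≤ P ω ω') (hP1 : ∀ ω, ∑ ω', P ω ω' = 1)
    (π : Ω → ℝ) (hπ0 : ∀ ω, 0 ≤ π ω) (hπ1 : ∑ ω, π ω = 1)
    (hstat : ∀ ω', ∑ ω, π ω * P ω ω' = π ω')
    (hergodic : ∃ t : ℕ, ∀ ω ω', 0 < (P ^ t) ω ω')
    (A M₀ : Finset Ω) (hdisj : ∀ ω ∈ M₀, ω ∉ A)
    (hA : ∑ ω ∈ A, π ω ≤ 1 / 2)
    (hblock : ∀ ω₁ ∈ A, ∀ ω₂, ω₂ ∉ A → ω₂ ∉ M₀ → P ω₁ ω₂ = 0)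
    (hM₀ : 0 < ∑ ω ∈ M₀, π ω)
    (τ : ℕ)
    (hτ : τ = sInf {t : ℕ | ∀ ω : Ω,
      (1 / 2) * ∑ ω', |(P ^ t) ω ω' - π ω'| ≤ (Real.exp 1)⁻¹}) :
    (∑ ω ∈ A, π ω) / (8 * ∑ ω ∈ M₀, π ω) ≤ (τ : ℝ) :=
  conductance_mixing_lower_bound_general P hP0 hP1 π hπ0 hπ1 hstat hergodic A M₀ hA hblock τ hτ
end
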